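/- arXiv:1707.08904 — 2 statements merged into one kernel-verified Lean document; each statement's English description precedes it below -/
import Mathlib

section
/- The function $x \mapsto \psi(2x) - \psi(x)$ is strictly decreasing on $(0, \infty)$. -/
/-!
By Legendre's duplication formula, `ψ(2x) - ψ(x) = (ψ(x + 1/2) - ψ(x)) / 2 + log 2`, so it suffices
that `ψ(x + a) - ψ(x)` is strictly decreasing for `a > 0`. This is the derivative of
`log Γ(x + a) - log Γ(x)`, which is concave as the limit of the Bohr–Mollerup approximations
`a log n + ∑_{m ≤ n} (log (x + m) - log (x + m + a))`, each a sum of concave terms. Concavity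
becomes strict through `Γ(x + 1) = x Γ(x)`, which writes the function as its own translate by `1`
plus the strictly concave `log x - log (x + a)`.
-/

/-- The digamma function `ψ = Γ'/Γ`, as the derivative of `log ∘ Γ` on `(0,∞)`. -/
noncomputable def digamma (x : ℝ) : ℝ := deriv (fun y => Real.log (Real.Gamma y)) x

open Real Set Filter Topology

theorem ConcaveOn.of_tendsto {E ι : Type*} [AddCommGroup E] [Module ℝ E] {s : Set E}
    {l : Filter ι} [l.NeBot] {F : ι → E → ℝ} {f : E → ℝ} (hF : ∀ i, ConcaveOn ℝ s (F i))
    (hlim : ∀ x ∈ s, Tendsto (fun i => F i x) l (𝓝 (f x))) : ConcaveOn ℝ s f := by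
  obtain ⟨i⟩ := l.nonempty_of_neBot
  refine ⟨(hF i).1, fun x hx y hy a b ha hb hab => ?_⟩
  exact le_of_tendsto_of_tendsto' (((hlim x hx).const_smul a).add ((hlim y hy).const_smul b))
    (hlim _ ((hF i).1 hx hy ha hb hab)) fun i => (hF i).2 hx hy ha hb hab

theorem strictConcaveOn_log_sub_log_add {a : ℝ} (ha : 0 < a) :
    StrictConcaveOn ℝ (Ioi 0) fun x => log x - log (x + a) := by
  have hderiv : ∀ x ∈ Ioi (0 : ℝ),
      HasDerivAt (fun x => log x - log (x + a)) (x⁻¹ - (x + a)⁻¹) x := fun x (hx : 0 < x) =>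
    (hasDerivAt_log hx.ne').sub ((hasDerivAt_log (by linarith)).comp_add_const x a)
  refine StrictAntiOn.strictConcaveOn_of_deriv (convex_Ioi 0)
    (fun x hx => (hderiv x hx).continuousAt.continuousWithinAt) ?_
  rw [interior_Ioi]
  intro x hx y hy hxy
  simp only [mem_Ioi] at hx hy
  rw [(hderiv x hx).deriv, (hderiv y hy).deriv]
  have key : ∀ z, 0 < z → z⁻¹ - (z + a)⁻¹ = a / (z * (z + a)) := fun z hz => by
    field_simp
    ring
  rw [key x hx, key y hy]
  gcongr

theorem logGammaSeq_add_sub_logGammaSeq (x a : ℝ) (n : ℕ) :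
    BohrMollerup.logGammaSeq (x + a) n - BohrMollerup.logGammaSeq x n =
      a * log n + ∑ m ∈ Finset.range (n + 1), (log (x + m) - log (x + m + a)) := by
  have hsum : ∑ m ∈ Finset.range (n + 1), log (x + a + m) =
      ∑ m ∈ Finset.range (n + 1), log (x + m + a) :=
    Finset.sum_congr rfl fun m _ => by rw [add_right_comm]
  rw [BohrMollerup.logGammaSeq, BohrMollerup.logGammaSeq, Finset.sum_sub_distrib, hsum]
  ring

theorem concaveOn_log_Gamma_add_sub {a : ℝ} (ha : 0 ≤ a) :
    ConcaveOn ℝ (Ioi 0) fun x => log (Gamma (x + a)) - log (Gamma x) := by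
  rcases ha.eq_or_lt with rfl | ha
  · simpa using concaveOn_const (0 : ℝ) (convex_Ioi 0)
  have hterm : ∀ m : ℕ, ConcaveOn ℝ (Ioi 0) fun x => log (x + m) - log (x + m + a) := fun m =>
    ((strictConcaveOn_log_sub_log_add ha).translate_left (m : ℝ)).concaveOn.subset
      (fun x (hx : 0 < x) => show (0 : ℝ) < m + x by positivity) (convex_Ioi 0)
  refine ConcaveOn.of_tendsto (l := atTop) (fun n => ?_) fun x (hx : 0 < x) =>
    (BohrMollerup.tendsto_log_gamma (by positivity : 0 < x + a)).sub
      (BohrMollerup.tendsto_log_gamma hx)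
  have hsum := Finset.sum_induction _ (ConcaveOn ℝ (Ioi 0)) (fun _ _ => ConcaveOn.add)
    (concaveOn_const 0 (convex_Ioi 0)) fun m (_ : m ∈ Finset.range (n + 1)) => hterm m
  rw [Finset.sum_fn] at hsum
  simp only [logGammaSeq_add_sub_logGammaSeq]
  exact (concaveOn_const _ (convex_Ioi 0)).add hsum

theorem log_Gamma_add_sub_eq_add_one {a x : ℝ} (ha : 0 ≤ a) (hx : 0 < x) :
    log (Gamma (x + a)) - log (Gamma x) =
      (log (Gamma (x + 1 + a)) - log (Gamma (x + 1))) + (log x - log (x + a)) := by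
  have hxa : 0 < x + a := by positivity
  rw [add_right_comm, Gamma_add_one hxa.ne', Gamma_add_one hx.ne',
    log_mul hxa.ne' (Gamma_pos_of_pos hxa).ne', log_mul hx.ne' (Gamma_pos_of_pos hx).ne']
  ring

theorem strictConcaveOn_log_Gamma_add_sub {a : ℝ} (ha : 0 < a) :
    StrictConcaveOn ℝ (Ioi 0) fun x => log (Gamma (x + a)) - log (Gamma x) := by
  have hshift : ConcaveOn ℝ (Ioi 0) fun x => log (Gamma (x + 1 + a)) - log (Gamma (x + 1)) :=
    ((concaveOn_log_Gamma_add_sub ha.le).translate_left 1).subset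
      (fun x (hx : 0 < x) => show (0 : ℝ) < 1 + x by positivity) (convex_Ioi 0)
  exact (hshift.add_strictConcaveOn (strictConcaveOn_log_sub_log_add ha)).congr
    fun x hx => (log_Gamma_add_sub_eq_add_one ha.le hx).symm

theorem hasDerivAt_log_Gamma {x : ℝ} (hx : 0 < x) :
    HasDerivAt (fun y => log (Gamma y)) (digamma x) x :=
  ((differentiableAt_Gamma fun m => by linarith [(Nat.cast_nonneg m : (0 : ℝ) ≤ m)]).log
    (Gamma_pos_of_pos hx).ne').hasDerivAt

theorem strictAntiOn_digamma_add_sub {a : ℝ} (ha : 0 < a) :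
    StrictAntiOn (fun x => digamma (x + a) - digamma x) (Ioi 0) := by
  have hderiv : ∀ x ∈ Ioi (0 : ℝ), HasDerivAt (fun x => log (Gamma (x + a)) - log (Gamma x))
      (digamma (x + a) - digamma x) x := fun x (hx : 0 < x) =>
    ((hasDerivAt_log_Gamma (by positivity)).comp_add_const x a).sub (hasDerivAt_log_Gamma hx)
  exact ((strictConcaveOn_log_Gamma_add_sub ha).strictAntiOn_deriv
    fun x hx => (hderiv x hx).differentiableAt).congr fun x hx => (hderiv x hx).deriv

theorem digamma_two_mul {x : ℝ} (hx : 0 < x) :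
    digamma (2 * x) = (digamma x + digamma (x + 1 / 2)) / 2 + log 2 := by
  have hdup : (fun y => log (Gamma y) + log (Gamma (y + 1 / 2))) =ᶠ[𝓝 x]
      fun y => log (Gamma (2 * y)) + (1 - 2 * y) * log 2 + log √π := by
    filter_upwards [Ioi_mem_nhds hx] with y (hy : 0 < y)
    have := congrArg log (Gamma_mul_Gamma_add_half y)
    rwa [log_mul (Gamma_pos_of_pos hy).ne' (Gamma_pos_of_pos (by positivity)).ne',
      log_mul (by positivity) (by positivity), log_mul (Gamma_pos_of_pos (by positivity)).ne'
      (by positivity), log_rpow two_pos] at this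
  have hleft := (hasDerivAt_log_Gamma hx).add
    ((hasDerivAt_log_Gamma (by positivity : 0 < x + 1 / 2)).comp_add_const x (1 / 2))
  have hright := ((((hasDerivAt_log_Gamma (by positivity : 0 < 2 * x)).comp x
    ((hasDerivAt_id x).const_mul 2)).add
      (((hasDerivAt_id x).const_mul 2).const_sub 1 |>.mul_const (log 2))).add_const (log √π))
  have := (hleft.congr_of_eventuallyEq hdup.symm).unique hright
  linarith

theorem digamma_two_x_sub_strictAnti :
    StrictAntiOn (fun x => digamma (2 * x) - digamma x) (Set.Ioi (0:ℝ)) := by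
  intro x hx y hy hxy
  have := strictAntiOn_digamma_add_sub one_half_pos hx hy hxy
  dsimp only at this ⊢
  rw [digamma_two_mul hx, digamma_two_mul hy]
  linarith
end

section
/- The function $u(x) = 1/\psi'(x)$ is strictly convex on $(0, \infty)$, where $\psi'$ is the trigamma function. -/
/-- The trigamma function `ψ'`. -/
noncomputable def trigamma : ℝ → ℝ := deriv digamma

/-!
On `(0, ∞)` the trigamma function is `S₂`, where `Sₚ(x) = ∑ₙ 1 / (x + n) ^ p`: convexity of
`log Γ` makes `ψ` monotone, which together with `ψ(x + 1) = ψ(x) + 1 / x` forces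
`ψ(y) - ψ(x) = ∑ₙ (1 / (x + n) - 1 / (y + n))`, a series that can be differentiated termwise.
As `Sₚ' = -p Sₚ₊₁`, we get `(1 / S₂)'' = 2 G / S₂ ^ 3` with `G = 4 S₃² - 3 S₂ S₄`, so it suffices
that `G > 0`. Writing `Sₚ(x) = x⁻ᵖ + Sₚ(x + 1)` and bounding `Sₚ(x + 1)` by truncated asymptotic
expansions (proved by telescoping) gives `G(x + 1) < G(x)`; since `G(x + n) → 0`, `G > 0`.
-/

open Filter Topology Set Real

section Telescoping

variable {f u : ℕ → ℝ}

theorem tsum_le_of_le_sub_succ (hf : Summable f) (hu : Tendsto u atTop (𝓝 0))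
    (h : ∀ n, f n ≤ u n - u (n + 1)) : ∑' n, f n ≤ u 0 := by
  have hpartial : Tendsto (fun N => u 0 - u N) atTop (𝓝 (u 0)) := by
    simpa using tendsto_const_nhds.sub hu
  refine le_of_tendsto_of_tendsto' hf.tendsto_sum_tsum_nat hpartial fun N => ?_
  rw [← Finset.sum_range_sub']
  exact Finset.sum_le_sum fun n _ => h n

theorem le_tsum_of_sub_succ_le (hf : Summable f) (hu : Tendsto u atTop (𝓝 0))
    (h : ∀ n, u n - u (n + 1) ≤ f n) : u 0 ≤ ∑' n, f n := by
  have := tsum_le_of_le_sub_succ hf.neg (u := fun n => -u n) (by simpa using hu.neg)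
    fun n => by linarith [h n]
  simpa [tsum_neg] using this

end Telescoping

theorem hasDerivAt_one_div_add_pow (c : ℝ) (p : ℕ) {y : ℝ} (hy : y + c ≠ 0) :
    HasDerivAt (fun z => 1 / (z + c) ^ p) (-p / (y + c) ^ (p + 1)) y := by
  have := (((hasDerivAt_id' y).add_const c).fun_pow p).fun_inv (pow_ne_zero p hy)
  simp only [one_div]
  refine this.congr_deriv ?_
  rcases p with _ | p
  · simp
  · simp only [Nat.add_sub_cancel, mul_one]
    field_simp
    ring

/-- The Hurwitz zeta function `ζ(p, x)`. -/
noncomputable def hurwitzSeries (p : ℕ) (x : ℝ) : ℝ := ∑' n : ℕ, 1 / (x + n) ^ p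

section HurwitzSeries

variable {p : ℕ} {x : ℝ}

theorem summable_one_div_add_nat_pow (x : ℝ) (hp : 2 ≤ p) :
    Summable fun n : ℕ => 1 / (x + n) ^ p := by
  refine Summable.of_norm <|
    ((summable_one_div_nat_add_rpow x p).mpr (by exact_mod_cast hp)).congr fun n => ?_
  rw [norm_div, norm_one, norm_pow, Real.norm_eq_abs, add_comm, Real.rpow_natCast]

theorem hurwitzSeries_pos (hp : 2 ≤ p) (hx : 0 < x) : 0 < hurwitzSeries p x :=
  (summable_one_div_add_nat_pow x hp).tsum_pos (fun n => by positivity) 0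
    (by simp only [Nat.cast_zero, add_zero]; positivity)

theorem hurwitzSeries_eq_add (hp : 2 ≤ p) (x : ℝ) :
    hurwitzSeries p x = 1 / x ^ p + hurwitzSeries p (x + 1) := by
  rw [hurwitzSeries, (summable_one_div_add_nat_pow x hp).tsum_eq_zero_add, hurwitzSeries]
  congr 1
  · simp
  · exact tsum_congr fun n => by push_cast; ring_nf

theorem tendsto_hurwitzSeries_add_nat (p : ℕ) (x : ℝ) :
    Tendsto (fun n : ℕ => hurwitzSeries p (x + n)) atTop (𝓝 0) :=
  (tendsto_sum_nat_add fun k : ℕ => 1 / (x + k) ^ p).congr fun n => by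
    simp only [hurwitzSeries, Nat.cast_add, add_assoc, add_comm (n : ℝ)]

theorem hasDerivAt_hurwitzSeries (hp : 2 ≤ p) (hx : 0 < x) :
    HasDerivAt (hurwitzSeries p) (-p * hurwitzSeries (p + 1) x) x := by
  have hu : Summable fun n : ℕ => p * (1 / (x / 2 + n) ^ (p + 1)) :=
    (summable_one_div_add_nat_pow (x / 2) (p := p + 1) (by omega)).mul_left (p : ℝ)
  have hx2 : x ∈ Ioi (x / 2) := by rw [mem_Ioi]; linarith
  have hderiv := hasDerivAt_tsum_of_isPreconnected hu isOpen_Ioi isPreconnected_Ioi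
    (g := fun (n : ℕ) (y : ℝ) => 1 / (y + n) ^ p)
    (g' := fun (n : ℕ) (y : ℝ) => -p / (y + n) ^ (p + 1))
    (fun n y (hy : x / 2 < y) =>
      hasDerivAt_one_div_add_pow _ _ (add_pos_of_pos_of_nonneg (by linarith) n.cast_nonneg).ne')
    (fun n y (hy : x / 2 < y) => by
      have : 0 < y := by linarith
      rw [norm_div, norm_neg, Real.norm_natCast, norm_pow, Real.norm_of_nonneg (by positivity),
        div_eq_mul_one_div]
      gcongr)
    hx2 (summable_one_div_add_nat_pow x hp) hx2
  unfold hurwitzSeries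
  rw [← tsum_mul_left]
  simpa only [neg_div, div_eq_mul_one_div (p : ℝ), neg_mul] using hderiv

variable {φ : ℝ → ℝ}

theorem hurwitzSeries_le_of_le_sub_succ (hp : 2 ≤ p) (hφ : Tendsto φ atTop (𝓝 0))
    (h : ∀ t, 0 < t → 1 / t ^ p ≤ φ t - φ (t + 1)) (hx : 0 < x) : hurwitzSeries p x ≤ φ x := by
  simpa [hurwitzSeries] using tsum_le_of_le_sub_succ (summable_one_div_add_nat_pow x hp)
    (hφ.comp (tendsto_atTop_add_const_left _ x tendsto_natCast_atTop_atTop))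
    fun n => by simpa [add_assoc] using h (x + n) (by positivity)

theorem le_hurwitzSeries_of_sub_succ_le (hp : 2 ≤ p) (hφ : Tendsto φ atTop (𝓝 0))
    (h : ∀ t, 0 < t → φ t - φ (t + 1) ≤ 1 / t ^ p) (hx : 0 < x) : φ x ≤ hurwitzSeries p x := by
  simpa [hurwitzSeries] using le_tsum_of_sub_succ_le (summable_one_div_add_nat_pow x hp)
    (hφ.comp (tendsto_atTop_add_const_left _ x tendsto_natCast_atTop_atTop))
    fun n => by simpa [add_assoc] using h (x + n) (by positivity)

end HurwitzSeries

section Digamma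

variable {x y : ℝ}

theorem differentiableAt_log_Gamma (hx : 0 < x) :
    DifferentiableAt ℝ (fun y => log (Gamma y)) x :=
  (differentiableAt_Gamma fun m => by linarith [m.cast_nonneg (α := ℝ)]).log
    (Gamma_pos_of_pos hx).ne'

theorem monotoneOn_digamma : MonotoneOn digamma (Ioi 0) :=
  convexOn_log_Gamma.monotoneOn_deriv fun _ hx => differentiableAt_log_Gamma hx

theorem digamma_add_one (hx : 0 < x) : digamma (x + 1) = digamma x + 1 / x := by
  have hrec : (fun y => log (Gamma y) + log y) =ᶠ[𝓝 x] fun y => log (Gamma (y + 1)) := by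
    filter_upwards [eventually_gt_nhds hx] with y hy
    rw [Gamma_add_one hy.ne', log_mul hy.ne' (Gamma_pos_of_pos hy).ne', add_comm]
  have hderiv := ((differentiableAt_log_Gamma hx).hasDerivAt.add
    (hasDerivAt_log hx.ne')).congr_of_eventuallyEq hrec.symm
  rw [digamma, ← deriv_comp_add_const, hderiv.deriv, one_div, digamma]

theorem digamma_add_nat (hx : 0 < x) (n : ℕ) :
    digamma (x + n) = digamma x + ∑ m ∈ Finset.range n, 1 / (x + m) := by
  induction n with
  | zero => simp
  | succ n ih =>
    rw [Nat.cast_succ, ← add_assoc, digamma_add_one (by positivity), ih, Finset.sum_range_succ,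
      add_assoc]

theorem tendsto_digamma_add_nat_sub (hx : 0 < x) (hxy : x ≤ y) :
    Tendsto (fun n : ℕ => digamma (y + n) - digamma (x + n)) atTop (𝓝 0) := by
  obtain ⟨k, hk⟩ := exists_nat_ge (y - x)
  have hupper : Tendsto (fun n : ℕ => ∑ m ∈ Finset.range k, 1 / (x + n + m)) atTop (𝓝 0) := by
    simpa using tendsto_finsetSum (Finset.range k) fun m _ =>
      (tendsto_const_nhds (x := (1 : ℝ))).div_atTop (tendsto_atTop_add_const_right _ (m : ℝ)
        (tendsto_atTop_add_const_left _ x tendsto_natCast_atTop_atTop))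
  have hpos {t : ℝ} (ht : x ≤ t) (n : ℕ) : t + n ∈ Ioi 0 :=
    mem_Ioi.mpr (add_pos_of_pos_of_nonneg (hx.trans_le ht) n.cast_nonneg)
  -- `ψ` is monotone, so `0 ≤ ψ(y+n) - ψ(x+n) ≤ ψ(x+k+n) - ψ(x+n) = ∑_{m<k} 1/(x+n+m)`.
  refine squeeze_zero (fun n => ?_) (fun n => ?_) hupper
  · exact sub_nonneg.mpr (monotoneOn_digamma (hpos le_rfl n) (hpos hxy n) (by linarith))
  · rw [sub_le_iff_le_add', ← digamma_add_nat (hpos le_rfl n), add_right_comm]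
    exact monotoneOn_digamma (hpos hxy n) (hpos (le_add_of_nonneg_right k.cast_nonneg) n)
      (by linarith)

theorem hasSum_digamma_sub (hx : 0 < x) (hy : 0 < y) :
    HasSum (fun n : ℕ => 1 / (x + n) - 1 / (y + n)) (digamma y - digamma x) := by
  wlog hxy : x ≤ y generalizing x y
  · simpa using (this hy hx (le_of_not_ge hxy)).neg
  have hnonneg (n : ℕ) : 0 ≤ 1 / (x + n) - 1 / (y + n) :=
    sub_nonneg.mpr (one_div_le_one_div_of_le (by positivity) (by linarith))
  have hpartial (n : ℕ) : ∑ m ∈ Finset.range n, (1 / (x + m) - 1 / (y + m)) =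
      digamma y - digamma x - (digamma (y + n) - digamma (x + n)) := by
    rw [Finset.sum_sub_distrib, digamma_add_nat hx, digamma_add_nat hy]
    ring
  rw [hasSum_iff_tendsto_nat_of_nonneg hnonneg, funext hpartial]
  simpa using tendsto_const_nhds.sub (tendsto_digamma_add_nat_sub hx hxy)

theorem hasDerivAt_digamma (hx : 0 < x) : HasDerivAt digamma (hurwitzSeries 2 x) x := by
  have hseries : (fun y => digamma x + ∑' n : ℕ, (1 / (x + n) - 1 / (y + n))) =ᶠ[𝓝 x] digamma := by
    filter_upwards [eventually_gt_nhds hx] with y hy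
    rw [(hasSum_digamma_sub hx hy).tsum_eq, add_sub_cancel]
  refine (HasDerivAt.const_add _ ?_).congr_of_eventuallyEq hseries.symm
  have hpos {y : ℝ} (hy : x / 2 ≤ y) (n : ℕ) : 0 < y + n :=
    add_pos_of_pos_of_nonneg (by linarith) n.cast_nonneg
  have hx2 : x ∈ Ioi (x / 2) := by rw [mem_Ioi]; linarith
  exact hasDerivAt_tsum_of_isPreconnected (summable_one_div_add_nat_pow (x / 2) le_rfl)
    isOpen_Ioi isPreconnected_Ioi (y₀ := x)
    (g := fun (n : ℕ) (y : ℝ) => 1 / (x + n) - 1 / (y + n))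
    (g' := fun (n : ℕ) (y : ℝ) => 1 / (y + n) ^ 2)
    (fun n y (hy : x / 2 < y) => by
      simpa [neg_div] using
        (hasDerivAt_one_div_add_pow (n : ℝ) 1 (hpos hy.le n).ne').const_sub (1 / (x + n)))
    (fun n y (hy : x / 2 < y) => by
      have := hpos le_rfl n
      rw [Real.norm_of_nonneg (by positivity)]
      gcongr)
    hx2 (by simp) hx2

theorem trigamma_eq_hurwitzSeries (hx : 0 < x) : trigamma x = hurwitzSeries 2 x :=
  (hasDerivAt_digamma hx).deriv

end Digamma

/-- Truncations of the asymptotic expansions of `hurwitzSeries p` for `p = 2, 3, 4`, chosen so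
that each telescopes against `1 / t ^ p` with a remainder of constant sign. -/
noncomputable def asymp₂ (t : ℝ) : ℝ := 1 / t + 1 / (2 * t ^ 2) + 1 / (6 * t ^ 3)

noncomputable def asymp₃ (t : ℝ) : ℝ :=
  1 / (2 * t ^ 2) + 1 / (2 * t ^ 3) + 1 / (4 * t ^ 4) - 1 / (12 * t ^ 6)

noncomputable def asymp₄ (t : ℝ) : ℝ := 1 / (3 * t ^ 3) + 1 / (2 * t ^ 4) + 1 / (3 * t ^ 5)

section Asymptotics

variable {t : ℝ}

theorem tendsto_one_div_mul_pow_atTop {c : ℝ} (hc : 0 < c) {k : ℕ} (hk : k ≠ 0) :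
    Tendsto (fun t : ℝ => 1 / (c * t ^ k)) atTop (𝓝 0) :=
  tendsto_const_nhds.div_atTop ((tendsto_pow_atTop hk).const_mul_atTop hc)

theorem tendsto_asymp₂ : Tendsto asymp₂ atTop (𝓝 0) := by
  have h := ((tendsto_one_div_mul_pow_atTop one_pos one_ne_zero).add
    (tendsto_one_div_mul_pow_atTop two_pos two_ne_zero)).add
    (tendsto_one_div_mul_pow_atTop (by norm_num : (0 : ℝ) < 6) three_ne_zero)
  unfold asymp₂
  simpa using h

theorem tendsto_asymp₃ : Tendsto asymp₃ atTop (𝓝 0) := by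
  have h := (((tendsto_one_div_mul_pow_atTop two_pos two_ne_zero).add
    (tendsto_one_div_mul_pow_atTop two_pos three_ne_zero)).add
    (tendsto_one_div_mul_pow_atTop four_pos four_ne_zero)).sub
    (tendsto_one_div_mul_pow_atTop (by norm_num : (0 : ℝ) < 12) (by norm_num : 6 ≠ 0))
  unfold asymp₃
  simpa using h

theorem tendsto_asymp₄ : Tendsto asymp₄ atTop (𝓝 0) := by
  have h := ((tendsto_one_div_mul_pow_atTop three_pos three_ne_zero).add
    (tendsto_one_div_mul_pow_atTop two_pos four_ne_zero)).add
    (tendsto_one_div_mul_pow_atTop three_pos (by norm_num : 5 ≠ 0))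
  unfold asymp₄
  simpa using h

theorem one_div_sq_le_asymp₂_sub (ht : 0 < t) : 1 / t ^ 2 ≤ asymp₂ t - asymp₂ (t + 1) := by
  have : asymp₂ t - asymp₂ (t + 1) - 1 / t ^ 2 = 1 / (6 * t ^ 3 * (t + 1) ^ 3) := by
    unfold asymp₂
    field_simp
    ring
  linarith [show 0 < 1 / (6 * t ^ 3 * (t + 1) ^ 3) by positivity]

theorem asymp₃_sub_le_one_div_pow_three (ht : 0 < t) :
    asymp₃ t - asymp₃ (t + 1) ≤ 1 / t ^ 3 := by
  have : 1 / t ^ 3 - (asymp₃ t - asymp₃ (t + 1)) =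
      (1 + 6 * t + 12 * t ^ 2 + 8 * t ^ 3) / (12 * t ^ 6 * (t + 1) ^ 6) := by
    unfold asymp₃
    field_simp
    ring
  linarith [show 0 < (1 + 6 * t + 12 * t ^ 2 + 8 * t ^ 3) / (12 * t ^ 6 * (t + 1) ^ 6) by
    positivity]

theorem one_div_pow_four_le_asymp₄_sub (ht : 0 < t) :
    1 / t ^ 4 ≤ asymp₄ t - asymp₄ (t + 1) := by
  have : asymp₄ t - asymp₄ (t + 1) - 1 / t ^ 4 =
      (2 + 7 * t + 7 * t ^ 2) / (6 * t ^ 5 * (t + 1) ^ 5) := by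
    unfold asymp₄
    field_simp
    ring
  linarith [show 0 < (2 + 7 * t + 7 * t ^ 2) / (6 * t ^ 5 * (t + 1) ^ 5) by positivity]

end Asymptotics

section Bounds

variable {x : ℝ}

theorem hurwitzSeries_two_le_asymp₂ (hx : 0 < x) : hurwitzSeries 2 x ≤ asymp₂ x :=
  hurwitzSeries_le_of_le_sub_succ le_rfl tendsto_asymp₂ (fun _ => one_div_sq_le_asymp₂_sub) hx

theorem asymp₃_le_hurwitzSeries_three (hx : 0 < x) : asymp₃ x ≤ hurwitzSeries 3 x :=
  le_hurwitzSeries_of_sub_succ_le (by norm_num) tendsto_asymp₃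
    (fun _ => asymp₃_sub_le_one_div_pow_three) hx

theorem hurwitzSeries_four_le_asymp₄ (hx : 0 < x) : hurwitzSeries 4 x ≤ asymp₄ x :=
  hurwitzSeries_le_of_le_sub_succ (by norm_num) tendsto_asymp₄
    (fun _ => one_div_pow_four_le_asymp₄_sub) hx

end Bounds

/-- In terms of the polygamma functions, `turanGap = ψ''² - ψ''' ψ' / 2` on `(0, ∞)`. -/
noncomputable def turanGap (x : ℝ) : ℝ :=
  4 * hurwitzSeries 3 x ^ 2 - 3 * hurwitzSeries 2 x * hurwitzSeries 4 x

section TuranGap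

variable {x : ℝ}

theorem turanGap_add_one_lt (hx : 0 < x) : turanGap (x + 1) < turanGap x := by
  set S₂ := hurwitzSeries 2 (x + 1)
  set S₃ := hurwitzSeries 3 (x + 1)
  set S₄ := hurwitzSeries 4 (x + 1)
  have hdiff : turanGap x - turanGap (x + 1) =
      1 / x ^ 6 + 8 * S₃ / x ^ 3 - 3 * S₂ / x ^ 4 - 3 * S₄ / x ^ 2 := by
    rw [turanGap, turanGap, hurwitzSeries_eq_add le_rfl x, hurwitzSeries_eq_add (by norm_num) x,
      hurwitzSeries_eq_add (by norm_num) x]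
    field_simp
    ring
  have hasymp : 0 < 1 / x ^ 6 + 8 * asymp₃ (x + 1) / x ^ 3 - 3 * asymp₂ (x + 1) / x ^ 4
      - 3 * asymp₄ (x + 1) / x ^ 2 := by
    have : 1 / x ^ 6 + 8 * asymp₃ (x + 1) / x ^ 3 - 3 * asymp₂ (x + 1) / x ^ 4
        - 3 * asymp₄ (x + 1) / x ^ 2 = (6 + 36 * x + 60 * x ^ 2 + 41 * x ^ 3 + 18 * x ^ 4
          + 3 * x ^ 5) / (6 * x ^ 6 * (x + 1) ^ 6) := by
      unfold asymp₂ asymp₃ asymp₄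
      field_simp
      ring
    rw [this]
    positivity
  have hx1 : 0 < x + 1 := by linarith
  have h₂ : 3 * S₂ / x ^ 4 ≤ 3 * asymp₂ (x + 1) / x ^ 4 := by
    gcongr; exact hurwitzSeries_two_le_asymp₂ hx1
  have h₃ : 8 * asymp₃ (x + 1) / x ^ 3 ≤ 8 * S₃ / x ^ 3 := by
    gcongr; exact asymp₃_le_hurwitzSeries_three hx1
  have h₄ : 3 * S₄ / x ^ 2 ≤ 3 * asymp₄ (x + 1) / x ^ 2 := by
    gcongr; exact hurwitzSeries_four_le_asymp₄ hx1
  linarith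

theorem tendsto_turanGap_add_nat (x : ℝ) :
    Tendsto (fun n : ℕ => turanGap (x + n)) atTop (𝓝 0) := by
  have h := (((tendsto_hurwitzSeries_add_nat 3 x).pow 2).const_mul 4).sub
    (((tendsto_hurwitzSeries_add_nat 2 x).mul (tendsto_hurwitzSeries_add_nat 4 x)).const_mul 3)
  simpa [turanGap, mul_assoc] using h

theorem turanGap_pos (hx : 0 < x) : 0 < turanGap x := by
  have hanti : StrictAnti fun n : ℕ => turanGap (x + n) := strictAnti_nat_of_succ_lt fun n => by
    simpa [add_assoc] using turanGap_add_one_lt (x := x + n) (by positivity)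
  simpa using (hanti.antitone.le_of_tendsto (tendsto_turanGap_add_nat x) 1).trans_lt
    (hanti zero_lt_one)

end TuranGap

section Convexity

variable {x : ℝ}

theorem hasDerivAt_inv_hurwitzSeries_two (hx : 0 < x) :
    HasDerivAt (fun y => (hurwitzSeries 2 y)⁻¹)
      (2 * hurwitzSeries 3 x / hurwitzSeries 2 x ^ 2) x := by
  have h := (hasDerivAt_hurwitzSeries le_rfl hx).inv (hurwitzSeries_pos le_rfl hx).ne'
  refine h.congr_deriv ?_
  push_cast
  ring

theorem hasDerivAt_deriv_inv_hurwitzSeries_two (hx : 0 < x) :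
    HasDerivAt (fun y => 2 * hurwitzSeries 3 y / hurwitzSeries 2 y ^ 2)
      (2 * turanGap x / hurwitzSeries 2 x ^ 3) x := by
  have h := ((hasDerivAt_hurwitzSeries (by norm_num : 2 ≤ 3) hx).const_mul 2).div
    ((hasDerivAt_hurwitzSeries le_rfl hx).pow 2)
    (pow_ne_zero 2 (hurwitzSeries_pos le_rfl hx).ne')
  refine h.congr_deriv ?_
  have := (hurwitzSeries_pos le_rfl hx).ne'
  rw [turanGap, Pi.pow_apply]
  field_simp
  push_cast
  ring

theorem strictConvexOn_inv_hurwitzSeries_two :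
    StrictConvexOn ℝ (Ioi 0) fun x => (hurwitzSeries 2 x)⁻¹ := by
  refine strictConvexOn_of_deriv2_pos (convex_Ioi 0)
    (fun x hx => (hasDerivAt_inv_hurwitzSeries_two hx).continuousAt.continuousWithinAt)
    fun x hx => ?_
  rw [interior_Ioi] at hx
  have hderiv : deriv (fun y => (hurwitzSeries 2 y)⁻¹) =ᶠ[𝓝 x]
      fun y => 2 * hurwitzSeries 3 y / hurwitzSeries 2 y ^ 2 := by
    filter_upwards [eventually_gt_nhds hx] with y hy
    exact (hasDerivAt_inv_hurwitzSeries_two hy).deriv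
  rw [Function.iterate_succ_apply, Function.iterate_one, hderiv.deriv_eq,
    (hasDerivAt_deriv_inv_hurwitzSeries_two hx).deriv]
  have := turanGap_pos hx
  have := hurwitzSeries_pos le_rfl hx
  positivity

end Convexity

theorem one_div_trigamma_strictConvexOn :
    StrictConvexOn ℝ (Set.Ioi (0:ℝ)) (fun x => 1 / trigamma x) :=
  strictConvexOn_inv_hurwitzSeries_two.congr fun x hx => by
    rw [one_div, trigamma_eq_hurwitzSeries hx]
end
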